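/- Let S and U be random variables taking values in finite sets 𝒮 and 𝒰 with joint probability mass function p_{SU}. For any real r ≥ 0, the probability (over U) of the set of values u ∈ 𝒰 for which H_c(S) − H_c(S | U = u) > log₂|𝒰| + 2r + 2 is at most 2^{−r}; equivalently, ℙ_U[ H_c(S) − H_c(S | U) ≤ log₂|𝒰| + 2r + 2 ] ≥ 1 − 2^{−r}. -/

import Mathlib

open Finset Real
open scoped Classical BigOperators

/-- Collision (Rényi order-2) entropy of a distribution `q` on a finite set. -/
noncomputable def collisionEntropy {S : Type*} [Fintype S] (q : S → ℝ) : ℝ :=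
  - Real.logb 2 (∑ s, (q s) ^ 2)

/-- Marginal on the first component of a joint pmf. -/
noncomputable def margS {S U : Type*} [Fintype U] (p : S × U → ℝ) (s : S) : ℝ :=
  ∑ u, p (s, u)

/-- Marginal on the second component of a joint pmf. -/
noncomputable def margU {S U : Type*} [Fintype S] (p : S × U → ℝ) (u : U) : ℝ :=
  ∑ s, p (s, u)

/-- Conditional collision entropy `H_c(S | U = u)` of a joint pmf `p` on `S × U`. -/
noncomputable def condCollisionEntropy {S U : Type*} [Fintype S] [Fintype U]
    (p : S × U → ℝ) (u : U) : ℝ :=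
  - Real.logb 2 (∑ s, (p (s, u) / margU p u) ^ 2)

/-! Since `∑ᵤ p(s,u)² ≤ q(s)²`, the collision probability `Q = ∑ₛ q(s)²` of `S` dominates
`∑ᵤ ∑ₛ p(s,u)²`. For `u` in the bad set the entropy gap, unfolded, says
`n · 4^{r+1} · Q · p_U(u)² < ∑ₛ p(s,u)²` with `n = |𝒰|`. Summing over the bad set and applying
Cauchy–Schwarz to its mass `∑ p_U(u)` bounds the square of that mass by `4^{-(r+1)}`. -/

noncomputable def collisionProb {S : Type*} [Fintype S] (q : S → ℝ) : ℝ :=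
  ∑ s, q s ^ 2

section Collision

variable {S U : Type*} [Fintype S] [Fintype U]

lemma collisionProb_pos {q : S → ℝ} (h : ∑ s, q s ≠ 0) : 0 < collisionProb q := by
  obtain ⟨s, -, hs⟩ := Finset.exists_ne_zero_of_sum_ne_zero h
  exact (pow_pos (abs_pos.mpr hs) 2).trans_le <| by
    rw [sq_abs]
    exact Finset.single_le_sum (f := fun s => q s ^ 2) (fun _ _ => sq_nonneg _) (mem_univ s)

lemma sum_margS (p : S × U → ℝ) : ∑ s, margS p s = ∑ su, p su :=
  (Fintype.sum_prod_type p).symm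

lemma sum_collisionProb_le_collisionProb_margS {p : S × U → ℝ} (hp : ∀ su, 0 ≤ p su) :
    ∑ u, collisionProb (fun s => p (s, u)) ≤ collisionProb (margS p) := by
  unfold collisionProb margS
  rw [Finset.sum_comm]
  exact Finset.sum_le_sum fun s _ => Finset.sum_sq_le_sq_sum_of_nonneg fun u _ => hp _

lemma condCollisionEntropy_eq (p : S × U → ℝ) (u : U) :
    condCollisionEntropy p u = -logb 2 (collisionProb (fun s => p (s, u)) / margU p u ^ 2) := by
  simp only [condCollisionEntropy, collisionProb, div_pow, Finset.sum_div]

lemma mul_collisionProb_mul_sq_margU_lt {p : S × U → ℝ} {u : U} {c : ℝ} (hc : 0 < c)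
    (hQ : 0 < collisionProb (margS p)) (hP : 0 < margU p u)
    (hgap : collisionEntropy (margS p) - condCollisionEntropy p u > logb 2 c) :
    c * collisionProb (margS p) * margU p u ^ 2 < collisionProb (fun s => p (s, u)) := by
  have hC : 0 < collisionProb (fun s => p (s, u)) := collisionProb_pos hP.ne'
  rw [condCollisionEntropy_eq, collisionEntropy, ← collisionProb, neg_sub_neg,
    ← logb_div (by positivity) hQ.ne', gt_iff_lt,
    logb_lt_logb_iff one_lt_two hc (by positivity), lt_div_iff₀ hQ, lt_div_iff₀ (by positivity)]
    at hgap
  linarith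

end Collision

lemma sum_le_inv_of_mul_sq_le {ι : Type*} (F : Finset ι) (P C : ι → ℝ) {n Q t : ℝ}
    (hn : (#F : ℝ) ≤ n) (hQ : 0 < Q) (ht : 0 < t) (hCsum : ∑ u ∈ F, C u ≤ Q)
    (hbound : ∀ u ∈ F, n * t ^ 2 * Q * P u ^ 2 ≤ C u) :
    ∑ u ∈ F, P u ≤ t⁻¹ := by
  rcases F.eq_empty_or_nonempty with rfl | hF
  · simpa using ht.le
  have hn_pos : 0 < n := (Nat.cast_pos.mpr hF.card_pos).trans_le hn
  have hsq : n * t ^ 2 * Q * (∑ u ∈ F, P u) ^ 2 ≤ n * t ^ 2 * Q * t⁻¹ ^ 2 :=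
    calc n * t ^ 2 * Q * (∑ u ∈ F, P u) ^ 2
        ≤ n * t ^ 2 * Q * (#F * ∑ u ∈ F, P u ^ 2) := by gcongr; exact sq_sum_le_card_mul_sum_sq
      _ = #F * ∑ u ∈ F, n * t ^ 2 * Q * P u ^ 2 := by rw [mul_left_comm, Finset.mul_sum]
      _ ≤ #F * Q := by gcongr; exact (Finset.sum_le_sum hbound).trans hCsum
      _ ≤ n * Q := by gcongr
      _ = n * t ^ 2 * Q * t⁻¹ ^ 2 := by field_simp
  exact le_of_sq_le_sq (le_of_mul_le_mul_left hsq (by positivity)) (by positivity)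

lemma logb_two_add_two_mul_add_two {n : ℝ} (hn : 0 < n) (r : ℝ) :
    logb 2 n + 2 * r + 2 = logb 2 (n * ((2 : ℝ) ^ (r + 1)) ^ 2) := by
  rw [logb_mul hn.ne' (by positivity), logb_pow, logb_rpow two_pos (by norm_num)]
  ring

theorem collision_entropy_leakage_bound_general
    {S U : Type*} [Fintype S] [Fintype U]
    (p : S × U → ℝ) (hp : ∀ su, 0 ≤ p su) (hsum : ∑ su, p su = 1)
    (r : ℝ) :
    ∑ u ∈ Finset.univ.filter (fun u : U => 0 < margU p u ∧
        collisionEntropy (margS p) - condCollisionEntropy p u >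
          Real.logb 2 (Fintype.card U) + 2 * r + 2),
      margU p u ≤ (2 : ℝ) ^ (-r) := by
  set F := Finset.univ.filter (fun u : U => 0 < margU p u ∧
    collisionEntropy (margS p) - condCollisionEntropy p u >
      Real.logb 2 (Fintype.card U) + 2 * r + 2)
  set t : ℝ := 2 ^ (r + 1)
  have hQ : 0 < collisionProb (margS p) := collisionProb_pos (by rw [sum_margS, hsum]; simp)
  have hCsum : ∑ u ∈ F, collisionProb (fun s => p (s, u)) ≤ collisionProb (margS p) :=
    (Finset.sum_le_univ_sum_of_nonneg fun u => Finset.sum_nonneg fun _ _ => sq_nonneg _).trans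
      (sum_collisionProb_le_collisionProb_margS hp)
  have hbad : ∀ u ∈ F, (Fintype.card U : ℝ) * t ^ 2 * collisionProb (margS p) * margU p u ^ 2
      ≤ collisionProb (fun s => p (s, u)) := by
    intro u hu
    obtain ⟨hP, hgap⟩ := (Finset.mem_filter.mp hu).2
    have hn : (0 : ℝ) < Fintype.card U := Nat.cast_pos.mpr (Fintype.card_pos_iff.mpr ⟨u⟩)
    rw [logb_two_add_two_mul_add_two hn] at hgap
    exact (mul_collisionProb_mul_sq_margU_lt (by positivity) hQ hP hgap).le
  calc ∑ u ∈ F, margU p u ≤ t⁻¹ :=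
        sum_le_inv_of_mul_sq_le F _ _ (mod_cast Finset.card_le_univ F) hQ (by positivity) hCsum hbad
    _ = 2 ^ (-(r + 1)) := (rpow_neg zero_le_two _).symm
    _ ≤ 2 ^ (-r) := rpow_le_rpow_of_exponent_le one_le_two (by linarith)

/-- For jointly distributed random variables `S, U` on finite sets with
joint pmf `p`, and any `r ≥ 0`, the probability (over `U`) of the set of values `u` for which
`H_c(S) − H_c(S | U = u) > log₂|𝒰| + 2r + 2` is at most `2^{−r}`. -/
theorem collision_entropy_leakage_bound
    {S U : Type*} [Fintype S] [Fintype U]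
    (p : S × U → ℝ) (hp : ∀ su, 0 ≤ p su) (hsum : ∑ su, p su = 1)
    (r : ℝ) (hr : 0 ≤ r) :
    ∑ u ∈ Finset.univ.filter (fun u : U => 0 < margU p u ∧
        collisionEntropy (margS p) - condCollisionEntropy p u >
          Real.logb 2 (Fintype.card U) + 2 * r + 2),
      margU p u ≤ (2 : ℝ) ^ (-r) :=
  collision_entropy_leakage_bound_general p hp hsum r
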